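/- Let (Q,*) be a quasigroup and N, K natural numbers with K ≤ N. If L, L' ∈ Q^K are two (possibly different) leader strings and A = (a_0, …, a_{N-1}), A' = (a'_0, …, a'_{N-1}) ∈ Q^N satisfy E_{L,K}(A) = E_{L',K}(A'), then a_i = a'_i for all i with K ≤ i ≤ N-1; that is, the output of K consecutive e-transformations determines all input coordinates with index at least K, independently of the leaders. -/

import Mathlib

/-- The quasigroup `e`-transformation of a string `A ∈ Q^N` with leader `l`:
`b 0 = l * a 0` and `b i = b (i-1) * a i`, i.e. `b i` is the left fold of
`mul` over `a 0, …, a i` starting from `l`. -/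
def eTr {Q : Type*} (mul : Q → Q → Q) (l : Q) {N : ℕ} (A : Fin N → Q)
    (i : Fin N) : Q :=
  ((List.ofFn A).take ((i : ℕ) + 1)).foldl mul l

/-- The `E`-transformation determined by a list of leaders: apply the
`e`-transformations with the successive leaders, first leader first. -/
def eTrL {Q : Type*} (mul : Q → Q → Q) {N : ℕ} (L : List Q)
    (A : Fin N → Q) : Fin N → Q :=
  L.foldl (fun B l => eTr mul l B) A

lemma eTr_succ {Q : Type*} (mul : Q → Q → Q) (l : Q) {N : ℕ} (A : Fin N → Q)
    (i : Fin N) (j : ℕ) (hj : (i : ℕ) = j + 1) :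
    eTr mul l A i = mul (eTr mul l A ⟨j, by omega⟩) (A i) := by
  unfold eTr
  have hjN : j + 1 < N := hj ▸ i.isLt
  have h1 : (List.ofFn A).take (j + 1 + 1) = (List.ofFn A).take (j + 1) ++ [A ⟨j+1, hjN⟩] := by
    rw [List.take_succ]
    congr 1
    simp [List.getElem?_ofFn, hjN]
  have h2 : A i = A ⟨j+1, hjN⟩ := by congr 1; exact Fin.ext hj
  simp only [hj, h1, List.foldl_append, List.foldl_cons, List.foldl_nil, h2]

lemma eTr_inj_high {Q : Type*} (mul : Q → Q → Q)
    (hleft : ∀ u v : Q, ∃! x, mul u x = v) {N : ℕ} :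
    ∀ (L L' : List Q), L.length = L'.length →
      ∀ (A A' : Fin N → Q), eTrL mul L A = eTrL mul L' A' →
      ∀ i : Fin N, L.length ≤ (i : ℕ) → A i = A' i := by
  intro L
  induction L with
  | nil =>
    intro L' hlen A A' h i _
    rw [List.length_eq_zero_iff.mp hlen.symm] at h
    exact congrFun h i
  | cons l L ih =>
    intro L' hlen A A' h i hi
    obtain ⟨l', L'', rfl⟩ : ∃ a t, L' = a :: t := by
      cases L' with
      | nil => simp at hlen
      | cons a t => exact ⟨a, t, rfl⟩
    simp only [List.length_cons, Nat.add_right_cancel_iff] at hlen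
    simp only [eTrL, List.foldl_cons] at h
    have hB : ∀ k : Fin N, L.length ≤ (k : ℕ) →
        eTr mul l A k = eTr mul l' A' k :=
      ih L'' hlen _ _ h
    have hi1 : 1 ≤ (i : ℕ) := by simp at hi; omega
    obtain ⟨j, hj⟩ : ∃ j, (i : ℕ) = j + 1 := ⟨(i : ℕ) - 1, by omega⟩
    have hjN : j < N := by omega
    have hBj : eTr mul l A ⟨j, hjN⟩ = eTr mul l' A' ⟨j, hjN⟩ := by
      apply hB; simp at hi ⊢; omega
    have hBi : eTr mul l A i = eTr mul l' A' i := by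
      apply hB; simp at hi ⊢; omega
    rw [eTr_succ mul l A i j hj, eTr_succ mul l' A' i j hj, hBj] at hBi
    obtain ⟨x, -, hx⟩ := hleft (eTr mul l' A' ⟨j, hjN⟩) (mul (eTr mul l' A' ⟨j, hjN⟩) (A' i))
    exact (hx _ hBi).trans (hx _ rfl).symm

/-- For a quasigroup `(Q, *)` and `K ≤ N`, if two (possibly
different) leader strings `L, L' ∈ Q^K` and inputs `A, A' ∈ Q^N` satisfy
`E_{L,K} A = E_{L',K} A'`, then `a i = a' i` for all `K ≤ i ≤ N - 1`:
the output of `K` consecutive `e`-transformations determines all input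
coordinates with index at least `K`, independently of the leaders. -/
theorem ETr_determines_high_coords {Q : Type*} (mul : Q → Q → Q)
    (hleft : ∀ u v : Q, ∃! x, mul u x = v)
    (hright : ∀ u v : Q, ∃! y, mul y u = v)
    (N K : ℕ) (hKN : K ≤ N) (L L' : Fin K → Q) (A A' : Fin N → Q)
    (h : eTrL mul (List.ofFn L) A = eTrL mul (List.ofFn L') A') :
    ∀ i : Fin N, K ≤ (i : ℕ) → A i = A' i := by
  intro i hi
  exact eTr_inj_high mul hleft (List.ofFn L) (List.ofFn L') (by simp) A A' h i
    (by simpa using hi)
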